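/- arXiv:1907.07678 — 3 statements merged into one kernel-verified Lean document; each statement's English description precedes it below -/
import Mathlib

section
/- Let Ω be a 2×2 matrix of meromorphic 1-forms of pole order n ≥ 2 at z=0 with non-scalar leading coefficient A₀. If A₀ has distinct eigenvalues then the discriminant Δ(Ω) = tr(Ω)² − 4det(Ω) (a meromorphic quadratic differential) has pole order exactly 2n at z=0; if A₀ is a nontrivial Jordan block with the (2,1)-entry c₁ of the subleading coefficient A₁ nonzero, then Δ(Ω) has pole order exactly 2n−1. -/
noncomputable section

/-- Truncation of a formal Laurent series: keep the coefficients of order `< k`. -/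
def truncLT (k : ℤ) (f : LaurentSeries ℂ) : LaurentSeries ℂ where
  coeff n := if n < k then f.coeff n else 0
  isPWO_support' := f.isPWO_support'.mono (by
    intro n hn
    simp only [Function.mem_support] at hn ⊢
    by_cases h : n < k
    · simpa [h] using hn
    · simp [h] at hn)

/-- The negative (principal) part of a formal Laurent series at `z = 0`. -/
def negPart (f : LaurentSeries ℂ) : LaurentSeries ℂ := truncLT 0 f

/-- Formal derivative `d/dz` of a formal Laurent series. -/
def lderiv (f : LaurentSeries ℂ) : LaurentSeries ℂ where
  coeff n := ((n + 1 : ℤ) : ℂ) * f.coeff (n + 1)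
  isPWO_support' := by
    have h : (Function.support fun n : ℤ => ((n + 1 : ℤ) : ℂ) * f.coeff (n + 1)) ⊆
        (fun n : ℤ => n - 1) '' (Function.support f.coeff) := by
      intro n hn
      simp only [Function.mem_support] at hn
      exact ⟨n + 1, fun h => hn (by rw [h, mul_zero]), by ring⟩
    exact (f.isPWO_support'.image_of_monotoneOn
      (fun a _ b _ hab => by omega)).mono h

/-- The gauge transformation `Ω ↦ M⁻¹ Ω M + M⁻¹ dM` (1-forms written `f dz`,
identified with their Laurent-series coefficient `f`). -/
def gaugeT (M Ω : Matrix (Fin 2) (Fin 2) (LaurentSeries ℂ)) :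
    Matrix (Fin 2) (Fin 2) (LaurentSeries ℂ) :=
  M⁻¹ * Ω * M + M⁻¹ * (M.map lderiv)

/-- `M` has formal power series entries, i.e. entries in `ℂ[[z]] ⊂ ℂ((z))`. -/
def MatHolo (M : Matrix (Fin 2) (Fin 2) (LaurentSeries ℂ)) : Prop :=
  ∀ i j, ∀ m : ℤ, m < 0 → (M i j).coeff m = 0

/-! Write `Ω = [[α, β], [γ, δ]]`, so that `Δ(Ω) = (α - δ)² + 4βγ`. If every entry has order
`≥ -n`, the coefficient of `z^{-2n}` in `Δ(Ω)` is the discriminant of the leading matrix `A₀`.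
When `A₀` is a Jordan block, `α - δ` and `γ` have order `≥ -n + 1`, so `(α - δ)²` has order
`≥ -2n + 2` and the coefficient of `z^{-2n+1}` comes from `4βγ` alone: it is `4 b₀ c₁`. -/

theorem Matrix.discr_fin_two_eq_sq_add {R : Type*} [CommRing R] (A : Matrix (Fin 2) (Fin 2) R) :
    A.discr = (A 0 0 - A 1 1) ^ 2 + 4 * (A 0 1 * A 1 0) := by
  rw [Matrix.discr_fin_two, Matrix.trace_fin_two, Matrix.det_fin_two]
  ring

namespace HahnSeries

variable {Γ R : Type*}

theorem coe_le_orderTop_iff [LinearOrder Γ] [Zero R] {x : R⟦Γ⟧} {a : Γ} :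
    (a : WithTop Γ) ≤ x.orderTop ↔ ∀ m < a, x.coeff m = 0 := by
  simp [le_orderTop_iff_forall]

theorem coe_add_one_le_orderTop [Zero R] {x : R⟦ℤ⟧} {a : ℤ} (hx : (a : WithTop ℤ) ≤ x.orderTop)
    (ha : x.coeff a = 0) : ((a + 1 : ℤ) : WithTop ℤ) ≤ x.orderTop := by
  rw [coe_le_orderTop_iff] at hx ⊢
  intro m hm
  rcases (Int.lt_add_one_iff.1 hm).lt_or_eq with hm | rfl
  exacts [hx m hm, ha]

theorem coe_le_orderTop_sub_diag [LinearOrder Γ] [AddGroup R] {M : Matrix (Fin 2) (Fin 2) R⟦Γ⟧}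
    {a : Γ} (hM : ∀ i j, (a : WithTop Γ) ≤ (M i j).orderTop) :
    (a : WithTop Γ) ≤ (M 0 0 - M 1 1).orderTop :=
  (le_min (hM 0 0) (hM 1 1)).trans min_orderTop_le_orderTop_sub

theorem coeff_ofNat_mul [AddCommMonoid Γ] [PartialOrder Γ] [IsOrderedCancelAddMonoid Γ]
    [NonAssocSemiring R] (n : ℕ) [n.AtLeastTwo] (x : R⟦Γ⟧) (g : Γ) :
    ((ofNat(n) : R⟦Γ⟧) * x).coeff g = ofNat(n) * x.coeff g := by
  rw [← single_zero_ofNat, coeff_single_zero_mul]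

section OrderedCancelAddMonoid

variable [AddCommMonoid Γ] [LinearOrder Γ] [IsOrderedCancelAddMonoid Γ]

section Semiring

variable [NonUnitalNonAssocSemiring R] {x y : R⟦Γ⟧} {a b : Γ}

theorem coe_add_le_orderTop_mul (hx : (a : WithTop Γ) ≤ x.orderTop)
    (hy : (b : WithTop Γ) ≤ y.orderTop) : ((a + b : Γ) : WithTop Γ) ≤ (x * y).orderTop :=
  (add_le_add hx hy).trans orderTop_add_le_mul

theorem coeff_mul_of_le_orderTop (hx : (a : WithTop Γ) ≤ x.orderTop)
    (hy : (b : WithTop Γ) ≤ y.orderTop) : (x * y).coeff (a + b) = x.coeff a * y.coeff b := by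
  rw [coe_le_orderTop_iff] at hx hy
  rw [coeff_mul, Finset.sum_eq_single (a, b)]
  · rintro ⟨i, j⟩ hij hne
    obtain ⟨hi, hj, hsum⟩ := Finset.mem_antidiagonal.1 hij
    have hai : a ≤ i := le_of_not_gt fun h => hi (hx i h)
    have hbj : b ≤ j := le_of_not_gt fun h => hj (hy j h)
    obtain ⟨rfl, rfl⟩ := (add_eq_add_iff_eq_and_eq hai hbj).1 hsum.symm
    exact absurd rfl hne
  · intro hab
    simp only [Finset.mem_antidiagonal, mem_support, and_true, not_and_or, not_not] at hab
    rcases hab with h | h <;> simp [h]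

end Semiring

variable [CommRing R] {M : Matrix (Fin 2) (Fin 2) R⟦Γ⟧}

theorem coeff_discr_fin_two (M : Matrix (Fin 2) (Fin 2) R⟦Γ⟧) (g : Γ) :
    M.discr.coeff g = ((M 0 0 - M 1 1) ^ 2).coeff g + 4 * (M 0 1 * M 1 0).coeff g := by
  rw [Matrix.discr_fin_two_eq_sq_add, coeff_add, coeff_ofNat_mul]

theorem le_orderTop_discr {c : WithTop Γ} (hd : c ≤ ((M 0 0 - M 1 1) ^ 2).orderTop)
    (hβγ : c ≤ (M 0 1 * M 1 0).orderTop) : c ≤ M.discr.orderTop :=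
  le_orderTop_iff_forall.2 fun m hm => by
    rw [coeff_discr_fin_two, coeff_eq_zero_of_lt_orderTop (hm.trans_le hd),
      coeff_eq_zero_of_lt_orderTop (hm.trans_le hβγ), mul_zero, add_zero]

theorem coe_add_le_orderTop_discr {a b : Γ} (hβ : (a : WithTop Γ) ≤ (M 0 1).orderTop)
    (hγ : (b : WithTop Γ) ≤ (M 1 0).orderTop) (hd : (b : WithTop Γ) ≤ (M 0 0 - M 1 1).orderTop)
    (hab : a ≤ b) : ((a + b : Γ) : WithTop Γ) ≤ M.discr.orderTop :=
  le_orderTop_discr ((WithTop.coe_le_coe.2 (add_le_add_left hab b)).trans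
    (sq (M 0 0 - M 1 1) ▸ coe_add_le_orderTop_mul hd hd)) (coe_add_le_orderTop_mul hβ hγ)

theorem coeff_discr_add {a b : Γ} (hβ : (a : WithTop Γ) ≤ (M 0 1).orderTop)
    (hγ : (b : WithTop Γ) ≤ (M 1 0).orderTop) (hd : (b : WithTop Γ) ≤ (M 0 0 - M 1 1).orderTop)
    (hab : a < b) : M.discr.coeff (a + b) = 4 * ((M 0 1).coeff a * (M 1 0).coeff b) := by
  have hd2 : ((a + b : Γ) : WithTop Γ) < ((M 0 0 - M 1 1) ^ 2).orderTop :=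
    (WithTop.coe_lt_coe.2 (add_lt_add_left hab b)).trans_le
      (sq (M 0 0 - M 1 1) ▸ coe_add_le_orderTop_mul hd hd)
  rw [coeff_discr_fin_two, coeff_eq_zero_of_lt_orderTop hd2, coeff_mul_of_le_orderTop hβ hγ,
    zero_add]

theorem coeff_discr_add_self {a : Γ} (hM : ∀ i j, (a : WithTop Γ) ≤ (M i j).orderTop) :
    M.discr.coeff (a + a) = (M.map (·.coeff a)).discr := by
  have hd := coe_le_orderTop_sub_diag hM
  rw [coeff_discr_fin_two, sq, coeff_mul_of_le_orderTop hd hd,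
    coeff_mul_of_le_orderTop (hM 0 1) (hM 1 0), Matrix.discr_fin_two_eq_sq_add]
  simp [coeff_sub, sq]

end OrderedCancelAddMonoid

end HahnSeries

open HahnSeries in
theorem discriminant_pole_order_general
    (n : ℕ) (Ω : Matrix (Fin 2) (Fin 2) (LaurentSeries ℂ))
    (hpole : ∀ i j, ∀ m : ℤ, m < -(n : ℤ) → (Ω i j).coeff m = 0)
    (A₀ : Matrix (Fin 2) (Fin 2) ℂ)
    (hA₀ : A₀ = Matrix.of fun i j => (Ω i j).coeff (-(n : ℤ)))
    (Δ : LaurentSeries ℂ)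
    (hΔ : Δ = (Matrix.trace Ω) ^ 2 - 4 * Ω.det) :
    -- unramified case: distinct eigenvalues of A₀
    (((Matrix.trace A₀) ^ 2 - 4 * A₀.det ≠ 0) →
      (∀ m : ℤ, m < -(2 * n : ℤ) → Δ.coeff m = 0) ∧ Δ.coeff (-(2 * n : ℤ)) ≠ 0) ∧
    -- ramified case: A₀ a nontrivial Jordan block, c₁ ≠ 0
    (∀ a₀ b₀ : ℂ, A₀ = Matrix.of !![a₀, b₀; 0, a₀] → b₀ ≠ 0 →
      (Ω 1 0).coeff (-(n : ℤ) + 1) ≠ 0 →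
      (∀ m : ℤ, m < -(2 * n : ℤ) + 1 → Δ.coeff m = 0) ∧
        Δ.coeff (-(2 * n : ℤ) + 1) ≠ 0) := by
  have hΩ i j : ((-n : ℤ) : WithTop ℤ) ≤ (Ω i j).orderTop := coe_le_orderTop_iff.2 (hpole i j)
  have hd := coe_le_orderTop_sub_diag hΩ
  rw [← Matrix.discr_fin_two] at hΔ
  subst hΔ hA₀
  refine ⟨fun hdisc => ?_, fun a₀ b₀ hJ hb₀ hc₁ => ?_⟩
  · rw [show -(2 * n : ℤ) = -n + -n by ring, ← coe_le_orderTop_iff, coeff_discr_add_self hΩ]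
    exact ⟨coe_add_le_orderTop_discr (hΩ 0 1) (hΩ 1 0) hd le_rfl, by rwa [Matrix.discr_fin_two]⟩
  · have h00 : (Ω 0 0).coeff (-n) = a₀ := congrFun₂ hJ 0 0
    have h01 : (Ω 0 1).coeff (-n) = b₀ := congrFun₂ hJ 0 1
    have h10 : (Ω 1 0).coeff (-n) = 0 := congrFun₂ hJ 1 0
    have h11 : (Ω 1 1).coeff (-n) = a₀ := congrFun₂ hJ 1 1
    have hγ := coe_add_one_le_orderTop (hΩ 1 0) h10
    have hd' := coe_add_one_le_orderTop hd (by rw [coeff_sub, h00, h11, sub_self])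
    rw [show -(2 * n : ℤ) + 1 = -n + (-n + 1) by ring, ← coe_le_orderTop_iff,
      coeff_discr_add (hΩ 0 1) hγ hd' (lt_add_one _), h01]
    exact ⟨coe_add_le_orderTop_discr (hΩ 0 1) hγ hd' (le_add_of_nonneg_right zero_le_one),
      mul_ne_zero (by norm_num) (mul_ne_zero hb₀ hc₁)⟩

/-- for a reduced pole of order `n ≥ 2`, the discriminant
`Δ(Ω) = tr(Ω)² − 4 det(Ω)` has pole order exactly `2n` in the unramified case
(`A₀` with distinct eigenvalues) and exactly `2n − 1` in the ramified case
(`A₀` a nontrivial Jordan block and `c₁ ≠ 0`). -/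
theorem discriminant_pole_order
    (n : ℕ) (hn : 2 ≤ n) (Ω : Matrix (Fin 2) (Fin 2) (LaurentSeries ℂ))
    (hpole : ∀ i j, ∀ m : ℤ, m < -(n : ℤ) → (Ω i j).coeff m = 0)
    (A₀ : Matrix (Fin 2) (Fin 2) ℂ)
    (hA₀ : A₀ = Matrix.of fun i j => (Ω i j).coeff (-(n : ℤ)))
    (Δ : LaurentSeries ℂ)
    (hΔ : Δ = (Matrix.trace Ω) ^ 2 - 4 * Ω.det) :
    -- unramified case: distinct eigenvalues of A₀
    (((Matrix.trace A₀) ^ 2 - 4 * A₀.det ≠ 0) →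
      (∀ m : ℤ, m < -(2 * n : ℤ) → Δ.coeff m = 0) ∧ Δ.coeff (-(2 * n : ℤ)) ≠ 0) ∧
    -- ramified case: A₀ a nontrivial Jordan block, c₁ ≠ 0
    (∀ a₀ b₀ : ℂ, A₀ = Matrix.of !![a₀, b₀; 0, a₀] → b₀ ≠ 0 →
      (Ω 1 0).coeff (-(n : ℤ) + 1) ≠ 0 →
      (∀ m : ℤ, m < -(2 * n : ℤ) + 1 → Δ.coeff m = 0) ∧
        Δ.coeff (-(2 * n : ℤ) + 1) ≠ 0) :=
  discriminant_pole_order_general n Ω hpole A₀ hA₀ Δ hΔ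

end
end

section
/- Let Ω = (A₀/z^n + A₁/z^{n-1} + ⋯)dz be a 2×2 connection matrix with A₀ = [[a₀,b₀],[0,a₀]], b₀ ≠ 0, and suppose the (2,1)-entry of A₁ vanishes. Then the meromorphic gauge transformation M = diag(1, z) transforms the leading coefficient into the scalar matrix a₀·I; consequently, after twisting by the rank-one connection d − a₀ dz/z^n, the pole order of the connection strictly decreases. -/
set_option maxHeartbeats 1000000

noncomputable section

/-! Conjugating by `diag(1, z)` multiplies the upper-right entry of `Ω` by `z`, divides the
lower-left entry by `z`, and `M⁻¹ dM` adds `dz/z` to the lower-right entry. Since `n ≥ 2`,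
the term `dz/z` lies above order `-n`; the nilpotent part `b₀` of `A₀` is pushed up to order
`-n + 1`; and the lower-left entry moves down one order, which is harmless because its
coefficients of orders `-n` and `-n + 1` vanish. So up to order `-n` the new connection is
`a₀ dz/zⁿ · I`, which the twist cancels. -/

open HahnSeries Matrix

theorem lderiv_zero : lderiv 0 = 0 := by
  ext m
  exact mul_zero _

theorem lderiv_single (k : ℤ) (c : ℂ) :
    lderiv (single k c) = single (k - 1) ((k : ℂ) * c) := by
  ext m
  change ((m + 1 : ℤ) : ℂ) * (single k c).coeff (m + 1) = _
  rw [coeff_single, coeff_single]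
  by_cases h : m = k - 1
  · subst h; simp
  · rw [if_neg h, if_neg (by omega), mul_zero]

theorem gaugeT_diagonal_single (k : Fin 2 → ℤ) (Ω : Matrix (Fin 2) (Fin 2) (LaurentSeries ℂ))
    (i j : Fin 2) :
    gaugeT (diagonal fun i => single (k i) 1) Ω i j =
      single (k j - k i) 1 * Ω i j + if i = j then single (-1) (k i : ℂ) else 0 := by
  have hinv : (diagonal fun i => single (k i) (1 : ℂ))⁻¹ = diagonal fun i => single (-k i) 1 :=
    inv_eq_right_inv <| by
      rw [diagonal_mul_diagonal, ← diagonal_one]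
      congr 1; funext i
      rw [single_mul_single, add_neg_cancel, mul_one, single_zero_one]
  rw [gaugeT, hinv, diagonal_map lderiv_zero, diagonal_mul_diagonal, Matrix.add_apply,
    mul_diagonal, diagonal_mul, diagonal_apply]
  congr 1
  · rw [mul_comm, ← mul_assoc, single_mul_single, one_mul, sub_eq_add_neg]
  · split_ifs with h
    · subst h; rw [lderiv_single, single_mul_single]; congr 2 <;> ring
    · rfl

theorem coeff_gaugeT_diagonal_single (k : Fin 2 → ℤ)
    (Ω : Matrix (Fin 2) (Fin 2) (LaurentSeries ℂ)) (i j : Fin 2) (m : ℤ) :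
    (gaugeT (diagonal fun i => single (k i) 1) Ω i j).coeff m =
      (Ω i j).coeff (m - (k j - k i)) + if i = j ∧ m = -1 then (k i : ℂ) else 0 := by
  rw [gaugeT_diagonal_single, coeff_add, coeff_single_mul, one_mul]
  congr 1
  by_cases h : i = j <;> simp [h, coeff_single]

theorem HahnSeries.coeff_eq_ite_of_le {Γ R : Type*} [LinearOrder Γ] [Zero R] {f : HahnSeries Γ R}
    {k : Γ} {a : R} (hlt : ∀ m < k, f.coeff m = 0) (hk : f.coeff k = a) {m : Γ} (hm : m ≤ k) :
    f.coeff m = if m = k then a else 0 := by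
  rcases hm.lt_or_eq with hm | rfl
  · rw [hlt m hm, if_neg hm.ne]
  · rw [if_pos rfl, hk]

theorem coeff_gaugeT_shear_of_jordan_leading {n : ℤ} (hn : 1 < n)
    {Ω : Matrix (Fin 2) (Fin 2) (LaurentSeries ℂ)}
    (hpole : ∀ i j, ∀ m < -n, (Ω i j).coeff m = 0) {a₀ : ℂ}
    (h₀₀ : (Ω 0 0).coeff (-n) = a₀) (h₁₀ : (Ω 1 0).coeff (-n) = 0)
    (h₁₁ : (Ω 1 1).coeff (-n) = a₀) (hc₁ : (Ω 1 0).coeff (-n + 1) = 0)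
    (i j : Fin 2) {m : ℤ} (hm : m ≤ -n) :
    (gaugeT (diagonal fun i => single (![0, 1] i) 1) Ω i j).coeff m =
      if i = j ∧ m = -n then a₀ else 0 := by
  rw [coeff_gaugeT_diagonal_single, if_neg (by omega : ¬(i = j ∧ m = -1)), add_zero]
  fin_cases i <;> fin_cases j <;>
    simp only [Fin.zero_eta, Fin.mk_one, Fin.isValue, cons_val_zero, cons_val_one, cons_val_fin_one,
      sub_self, sub_zero, zero_sub, sub_neg_eq_add, true_and, false_and, zero_ne_one, one_ne_zero,
      if_false]
  · exact (Ω 0 0).coeff_eq_ite_of_le (hpole 0 0) h₀₀ hm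
  · exact hpole 0 1 _ (by omega)
  · obtain h | h | h : m + 1 < -n ∨ m + 1 = -n ∨ m + 1 = -n + 1 := by omega
    · exact hpole 1 0 _ h
    · rw [h, h₁₀]
    · rw [h, hc₁]
  · exact (Ω 1 1).coeff_eq_ite_of_le (hpole 1 1) h₁₁ hm

theorem jordan_block_pole_order_drop_general
    (n : ℕ) (hn : 2 ≤ n) (Ω : Matrix (Fin 2) (Fin 2) (LaurentSeries ℂ))
    (hpole : ∀ i j, ∀ m : ℤ, m < -(n : ℤ) → (Ω i j).coeff m = 0)
    (a₀ b₀ : ℂ)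
    (hA₀ : (Matrix.of fun i j => (Ω i j).coeff (-(n : ℤ))) = Matrix.of !![a₀, b₀; 0, a₀])
    (hc₁ : (Ω 1 0).coeff (-(n : ℤ) + 1) = 0)
    (M : Matrix (Fin 2) (Fin 2) (LaurentSeries ℂ))
    (hM : M = Matrix.diagonal ![1, HahnSeries.single 1 1]) :
    -- the transformed leading coefficient is the scalar matrix a₀·I
    ((∀ i j, ∀ m : ℤ, m < -(n : ℤ) → ((gaugeT M Ω) i j).coeff m = 0) ∧
      (Matrix.of fun i j => ((gaugeT M Ω) i j).coeff (-(n : ℤ)))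
        = a₀ • (1 : Matrix (Fin 2) (Fin 2) ℂ)) ∧
    -- after twisting by d − a₀ dz/zⁿ the pole order strictly decreases
    (∀ i j, ∀ m : ℤ, m < -((n : ℤ) - 1) →
      ((gaugeT M Ω + (Matrix.scalar (Fin 2)) (HahnSeries.single (-(n : ℤ)) (-a₀))) i j).coeff m
        = 0) := by
  have hshear : M = diagonal fun i => single (![0, 1] i) 1 := by
    rw [hM]; congr 1; funext i; fin_cases i <;> rfl
  have hA (i j : Fin 2) : (Ω i j).coeff (-n) = !![a₀, b₀; 0, a₀] i j :=
    congrFun (congrFun hA₀ i) j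
  have hcoeff :=
    coeff_gaugeT_shear_of_jordan_leading (by omega) hpole (hA 0 0) (hA 1 0) (hA 1 1) hc₁
  rw [hshear]
  refine ⟨⟨fun i j m hm => ?_, ?_⟩, fun i j m hm => ?_⟩
  · simpa [hm.ne] using hcoeff i j hm.le
  · ext i j
    simp [hcoeff, one_apply]
  · rw [Matrix.add_apply, coeff_add, hcoeff i j (by omega), scalar_apply, diagonal_apply]
    by_cases hij : i = j <;> by_cases hmn : m = -n <;> simp [hij, hmn]

/-- if `A₀ = [[a₀,b₀],[0,a₀]]` with `b₀ ≠ 0` and the `(2,1)`-entry of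
`A₁` vanishes, then the meromorphic gauge transformation `M = diag(1,z)` makes the
leading coefficient scalar, and twisting by `d − a₀ dz/z^n` strictly decreases
the pole order. -/
theorem jordan_block_pole_order_drop
    (n : ℕ) (hn : 2 ≤ n) (Ω : Matrix (Fin 2) (Fin 2) (LaurentSeries ℂ))
    (hpole : ∀ i j, ∀ m : ℤ, m < -(n : ℤ) → (Ω i j).coeff m = 0)
    (a₀ b₀ : ℂ) (hb₀ : b₀ ≠ 0)
    (hA₀ : (Matrix.of fun i j => (Ω i j).coeff (-(n : ℤ))) = Matrix.of !![a₀, b₀; 0, a₀])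
    (hc₁ : (Ω 1 0).coeff (-(n : ℤ) + 1) = 0)
    (M : Matrix (Fin 2) (Fin 2) (LaurentSeries ℂ))
    (hM : M = Matrix.diagonal ![1, HahnSeries.single 1 1]) :
    -- the transformed leading coefficient is the scalar matrix a₀·I
    ((∀ i j, ∀ m : ℤ, m < -(n : ℤ) → ((gaugeT M Ω) i j).coeff m = 0) ∧
      (Matrix.of fun i j => ((gaugeT M Ω) i j).coeff (-(n : ℤ)))
        = a₀ • (1 : Matrix (Fin 2) (Fin 2) ℂ)) ∧
    -- after twisting by d − a₀ dz/zⁿ the pole order strictly decreases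
    (∀ i j, ∀ m : ℤ, m < -((n : ℤ) - 1) →
      ((gaugeT M Ω + (Matrix.scalar (Fin 2)) (HahnSeries.single (-(n : ℤ)) (-a₀))) i j).coeff m
        = 0) :=
  jordan_block_pole_order_drop_general n hn Ω hpole a₀ b₀ hA₀ hc₁ M hM
end
end

section
/- Consider the connection matrix Ω₀ = [[0, 1/P(x)],[c₀(x), d₀(x)]]dx near a point x = q where P(q) ≠ 0, with c₀(x) = p/(x−q) + ĉ(x) and d₀(x) = −1/(x−q) + d̂(x), where ĉ, d̂ are holomorphic at q. Then the residue matrix at x = q has eigenvalues 0 and −1, and the singularity x = q is apparent (removable after the elementary transformation Y₀ = MỸ₀ with M = [[1,0],[p, x−q]]) if and only if ĉ(q) + p·d̂(q) − p²/P(q) = 0. -/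
/-!
Translating by `q` turns the Laurent expansion at `q` into a ring homomorphism
`RatFunc ℂ →+* LaurentSeries ℂ` under which `(x - q)^{±1}` become monomials, so residues and
holomorphy at `q` are read off coefficientwise. The gauge transform by `M = [[1,0],[p, x-q]]` has
entries `p/P`, `(x-q)/P`, `d̂ - p/P` and `(x - q)⁻¹ (ĉ + p d̂ - p²/P)`: the first three are
holomorphic at `q`, and the last is holomorphic exactly when the constant coefficient of
`ĉ + p d̂ - p²/P` at `q` vanishes.
-/

set_option maxHeartbeats 1000000

noncomputable section

/-- The rational function `x ↦ f(x + t)`: recentering at the point `t`. -/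
def shiftRF (t : ℂ) (f : RatFunc ℂ) : RatFunc ℂ :=
  algebraMap (Polynomial ℂ) (RatFunc ℂ) (f.num.comp (Polynomial.X + Polynomial.C t)) /
    algebraMap (Polynomial ℂ) (RatFunc ℂ) (f.denom.comp (Polynomial.X + Polynomial.C t))

/-- The `m`-th coefficient of the Laurent expansion of `f` at the point `t`. -/
def lcoeff (t : ℂ) (m : ℤ) (f : RatFunc ℂ) : ℂ :=
  (@algebraMap (RatFunc ℂ) (LaurentSeries ℂ) _ _ (RatFunc.liftAlgebra ℂ (LaurentSeries ℂ))
    (shiftRF t f)).coeff m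

/-- The residue at `t` of the rational 1-form `f dx`. -/
def resAt (t : ℂ) (f : RatFunc ℂ) : ℂ := lcoeff t (-1) f

/-- `f` is holomorphic at the point `t`. -/
def holoAt (t : ℂ) (f : RatFunc ℂ) : Prop := ∀ m : ℤ, m < 0 → lcoeff t m f = 0

/-- The rational function `x ↦ f(1/x)`. -/
def invSub (f : RatFunc ℂ) : RatFunc ℂ :=
  Polynomial.aeval (RatFunc.X : RatFunc ℂ)⁻¹ f.num /
    Polynomial.aeval (RatFunc.X : RatFunc ℂ)⁻¹ f.denom

/-- Derivative of a rational function. -/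
def rderiv (f : RatFunc ℂ) : RatFunc ℂ :=
  algebraMap (Polynomial ℂ) (RatFunc ℂ)
      (Polynomial.derivative f.num * f.denom - f.num * Polynomial.derivative f.denom) /
    algebraMap (Polynomial ℂ) (RatFunc ℂ) (f.denom ^ 2)

/-- The gauge transformation `Ω ↦ M⁻¹ Ω M + M⁻¹ dM` for rational matrices
(1-forms `f dx` identified with their rational coefficient `f`). -/
def gaugeR (M Ω : Matrix (Fin 2) (Fin 2) (RatFunc ℂ)) :
    Matrix (Fin 2) (Fin 2) (RatFunc ℂ) :=
  M⁻¹ * Ω * M + M⁻¹ * (M.map rderiv)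

open Polynomial (taylor taylorEquiv)

def taylorShift (t : ℂ) : RatFunc ℂ ≃+* RatFunc ℂ :=
  IsFractionRing.ringEquivOfRingEquiv (taylorEquiv t).toRingEquiv

theorem taylorShift_algebraMap (t : ℂ) (A : Polynomial ℂ) :
    taylorShift t (algebraMap _ _ A) = algebraMap _ _ (taylor t A) :=
  IsFractionRing.ringEquivOfRingEquiv_algebraMap _ A

theorem shiftRF_eq_taylorShift (t : ℂ) (f : RatFunc ℂ) : shiftRF t f = taylorShift t f := by
  conv_rhs => rw [← RatFunc.num_div_denom f]
  rw [map_div₀, taylorShift_algebraMap, taylorShift_algebraMap]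
  rfl

def laurentAt (t : ℂ) : RatFunc ℂ →+* LaurentSeries ℂ :=
  (@algebraMap (RatFunc ℂ) (LaurentSeries ℂ) _ _ (RatFunc.liftAlgebra ℂ (LaurentSeries ℂ))).comp
    (taylorShift t).toRingHom

theorem lcoeff_eq_coeff_laurentAt (t : ℂ) (m : ℤ) (f : RatFunc ℂ) :
    lcoeff t m f = (laurentAt t f).coeff m := by
  rw [lcoeff, shiftRF_eq_taylorShift]
  rfl

theorem laurentAt_algebraMap (t : ℂ) (A : Polynomial ℂ) :
    laurentAt t (algebraMap _ _ A) = HahnSeries.ofPowerSeries ℤ ℂ (taylor t A : PowerSeries ℂ) :=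
  (congrArg _ (taylorShift_algebraMap t A)).trans (RatFunc.coe_coe _).symm

theorem laurentAt_C (t a : ℂ) : laurentAt t (RatFunc.C a) = HahnSeries.single 0 a := by
  rw [← RatFunc.algebraMap_C, laurentAt_algebraMap]
  simp [HahnSeries.ofPowerSeries_C, HahnSeries.C_apply]

theorem laurentAt_X_sub_C (t : ℂ) :
    laurentAt t (RatFunc.X - RatFunc.C t) = HahnSeries.single 1 1 := by
  rw [← RatFunc.algebraMap_X, ← RatFunc.algebraMap_C, ← map_sub, laurentAt_algebraMap]
  simp [Polynomial.taylor_apply, Polynomial.sub_comp]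

theorem laurentAt_inv_X_sub_C (t : ℂ) :
    laurentAt t (RatFunc.X - RatFunc.C t)⁻¹ = HahnSeries.single (-1) 1 := by
  rw [map_inv₀, laurentAt_X_sub_C, eq_comm]
  apply eq_inv_of_mul_eq_one_left
  rw [HahnSeries.single_mul_single]
  norm_num [HahnSeries.single_zero_one]

theorem laurentAt_inv_algebraMap {t : ℂ} {P : Polynomial ℂ} (hP : P.eval t ≠ 0) :
    laurentAt t (algebraMap _ _ P)⁻¹
      = HahnSeries.ofPowerSeries ℤ ℂ (taylor t P : PowerSeries ℂ)⁻¹ := by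
  have hunit : PowerSeries.constantCoeff (taylor t P : PowerSeries ℂ) ≠ 0 := by
    rwa [Polynomial.constantCoeff_coe, Polynomial.taylor_coeff_zero]
  rw [map_inv₀, laurentAt_algebraMap, eq_comm]
  apply eq_inv_of_mul_eq_one_left
  rw [← map_mul, PowerSeries.inv_mul_cancel _ hunit, map_one]

section lcoeff

variable (t : ℂ) (m : ℤ) (f g : RatFunc ℂ)

theorem lcoeff_add : lcoeff t m (f + g) = lcoeff t m f + lcoeff t m g := by
  simp only [lcoeff_eq_coeff_laurentAt, map_add, HahnSeries.coeff_add]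

theorem lcoeff_sub : lcoeff t m (f - g) = lcoeff t m f - lcoeff t m g := by
  simp only [lcoeff_eq_coeff_laurentAt, map_sub, HahnSeries.coeff_sub]

theorem lcoeff_neg : lcoeff t m (-f) = -lcoeff t m f := by
  simp only [lcoeff_eq_coeff_laurentAt, map_neg, HahnSeries.coeff_neg]

theorem lcoeff_zero : lcoeff t m 0 = 0 := by
  simp only [lcoeff_eq_coeff_laurentAt, map_zero, HahnSeries.coeff_zero]

theorem lcoeff_C_mul (a : ℂ) : lcoeff t m (RatFunc.C a * f) = a * lcoeff t m f := by
  simp [lcoeff_eq_coeff_laurentAt, laurentAt_C]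

theorem lcoeff_X_sub_C_mul :
    lcoeff t m ((RatFunc.X - RatFunc.C t) * f) = lcoeff t (m - 1) f := by
  simpa [lcoeff_eq_coeff_laurentAt, laurentAt_X_sub_C] using
    HahnSeries.coeff_single_mul_add (r := (1 : ℂ)) (x := laurentAt t f) (a := m - 1) (b := 1)

theorem lcoeff_inv_X_sub_C_mul :
    lcoeff t m ((RatFunc.X - RatFunc.C t)⁻¹ * f) = lcoeff t (m + 1) f := by
  simp only [lcoeff_eq_coeff_laurentAt, map_mul, laurentAt_inv_X_sub_C]
  simpa using
    HahnSeries.coeff_single_mul_add (r := (1 : ℂ)) (x := laurentAt t f) (a := m + 1) (b := -1)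

theorem lcoeff_inv_X_sub_C :
    lcoeff t m (RatFunc.X - RatFunc.C t)⁻¹ = if m = -1 then 1 else 0 := by
  rw [lcoeff_eq_coeff_laurentAt, laurentAt_inv_X_sub_C, HahnSeries.coeff_single]
  split_ifs <;> rfl

theorem lcoeff_zero_inv_algebraMap {P : Polynomial ℂ} (hP : P.eval t ≠ 0) :
    lcoeff t 0 (algebraMap _ _ P)⁻¹ = (P.eval t)⁻¹ := by
  rw [lcoeff_eq_coeff_laurentAt, laurentAt_inv_algebraMap hP, PowerSeries.coeff_coe,
    if_neg (lt_irrefl 0), Int.natAbs_zero, PowerSeries.coeff_zero_eq_constantCoeff_apply,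
    PowerSeries.constantCoeff_inv, Polynomial.constantCoeff_coe, Polynomial.taylor_coeff_zero]

end lcoeff

section holoAt

variable {t : ℂ} {f g : RatFunc ℂ}

theorem holoAt_inv_algebraMap {P : Polynomial ℂ} (hP : P.eval t ≠ 0) :
    holoAt t (algebraMap _ _ P)⁻¹ := fun m hm => by
  rw [lcoeff_eq_coeff_laurentAt, laurentAt_inv_algebraMap hP, PowerSeries.coeff_coe, if_pos hm]

theorem holoAt.add (hf : holoAt t f) (hg : holoAt t g) : holoAt t (f + g) := fun m hm => by
  rw [lcoeff_add, hf m hm, hg m hm, add_zero]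

theorem holoAt.sub (hf : holoAt t f) (hg : holoAt t g) : holoAt t (f - g) := fun m hm => by
  rw [lcoeff_sub, hf m hm, hg m hm, sub_zero]

theorem holoAt.C_mul (a : ℂ) (hf : holoAt t f) : holoAt t (RatFunc.C a * f) := fun m hm => by
  rw [lcoeff_C_mul, hf m hm, mul_zero]

theorem holoAt.X_sub_C_mul (hf : holoAt t f) : holoAt t ((RatFunc.X - RatFunc.C t) * f) :=
  fun m hm => by
    rw [lcoeff_X_sub_C_mul]
    exact hf _ (by omega)

theorem holoAt_inv_X_sub_C_mul_iff (hf : holoAt t f) :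
    holoAt t ((RatFunc.X - RatFunc.C t)⁻¹ * f) ↔ lcoeff t 0 f = 0 := by
  refine ⟨fun h => by simpa [lcoeff_inv_X_sub_C_mul] using h (-1) (by norm_num), fun h0 m hm => ?_⟩
  rw [lcoeff_inv_X_sub_C_mul]
  rcases (show m + 1 ≤ 0 by omega).eq_or_lt with hm' | hm'
  · rwa [hm']
  · exact hf _ hm'

end holoAt

theorem Matrix.of_matrix {m n α : Type*} (A : Matrix m n α) : Matrix.of A = A := rfl

theorem RatFunc.X_sub_C_ne_zero (t : ℂ) : (RatFunc.X - RatFunc.C t : RatFunc ℂ) ≠ 0 := by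
  rw [← RatFunc.algebraMap_X, ← RatFunc.algebraMap_C, ← map_sub]
  exact RatFunc.algebraMap_ne_zero (Polynomial.X_sub_C_ne_zero t)

theorem rderiv_algebraMap (A : Polynomial ℂ) :
    rderiv (algebraMap _ _ A) = algebraMap _ _ (Polynomial.derivative A) := by
  simp [rderiv]

def elementaryGauge (p q : ℂ) : Matrix (Fin 2) (Fin 2) (RatFunc ℂ) :=
  !![1, 0; RatFunc.C p, RatFunc.X - RatFunc.C q]

theorem elementaryGauge_inv (p q : ℂ) :
    (elementaryGauge p q)⁻¹
      = !![1, 0; -RatFunc.C p * (RatFunc.X - RatFunc.C q)⁻¹, (RatFunc.X - RatFunc.C q)⁻¹] := by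
  apply Matrix.inv_eq_right_inv
  have := RatFunc.X_sub_C_ne_zero q
  simp [elementaryGauge, Matrix.one_fin_two, this]
  field_simp
  ring

theorem elementaryGauge_map_rderiv (p q : ℂ) :
    (elementaryGauge p q).map rderiv = !![0, 0; 0, 1] := by
  have h1 : rderiv 1 = 0 := by
    rw [← map_one (algebraMap (Polynomial ℂ) _), rderiv_algebraMap, Polynomial.derivative_one,
      map_zero]
  have h0 : rderiv 0 = 0 := by
    rw [← map_zero (algebraMap (Polynomial ℂ) _), rderiv_algebraMap, Polynomial.derivative_zero]
  have hC : rderiv (RatFunc.C p) = 0 := by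
    rw [← RatFunc.algebraMap_C, rderiv_algebraMap, Polynomial.derivative_C, map_zero]
  have hX : rderiv (RatFunc.X - RatFunc.C q) = 1 := by
    rw [← RatFunc.algebraMap_X, ← RatFunc.algebraMap_C, ← map_sub, rderiv_algebraMap,
      Polynomial.derivative_X_sub_C, map_one]
  ext i j
  fin_cases i <;> fin_cases j
  exacts [h1, h0, hC, hX]

theorem gaugeR_elementaryGauge (p q : ℂ) (a b c d : RatFunc ℂ) :
    gaugeR (elementaryGauge p q) !![a, b; c, d]
      = !![a + RatFunc.C p * b, (RatFunc.X - RatFunc.C q) * b;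
          (RatFunc.X - RatFunc.C q)⁻¹ *
            (c + RatFunc.C p * d - RatFunc.C p * a - RatFunc.C p ^ 2 * b),
          d - RatFunc.C p * b + (RatFunc.X - RatFunc.C q)⁻¹] := by
  have := RatFunc.X_sub_C_ne_zero q
  rw [gaugeR, elementaryGauge_inv, elementaryGauge_map_rderiv]
  ext i j
  fin_cases i <;> fin_cases j <;> simp [elementaryGauge] <;> field_simp <;> ring

theorem holoAt_gaugeR_elementaryGauge_iff {p q : ℂ} {a b c d : RatFunc ℂ} (ha : holoAt q a)
    (hb : holoAt q b) (hd : holoAt q (d - RatFunc.C p * b + (RatFunc.X - RatFunc.C q)⁻¹))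
    (hc : holoAt q (c + RatFunc.C p * d - RatFunc.C p * a - RatFunc.C p ^ 2 * b)) :
    (∀ i j, holoAt q (gaugeR (elementaryGauge p q) !![a, b; c, d] i j)) ↔
      lcoeff q 0 (c + RatFunc.C p * d - RatFunc.C p * a - RatFunc.C p ^ 2 * b) = 0 := by
  simp only [gaugeR_elementaryGauge, Fin.forall_fin_two, Matrix.of_apply, Matrix.cons_val_zero,
    Matrix.cons_val_one]
  rw [holoAt_inv_X_sub_C_mul_iff hc]
  exact ⟨fun h => h.2.1, fun h => ⟨⟨ha.add (hb.C_mul p), hb.X_sub_C_mul⟩, h, hd⟩⟩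

/-- at a point `q` with `P(q) ≠ 0`, for
`Ω₀ = [[0, 1/P],[p/(x−q) + ĉ, −1/(x−q) + d̂]]dx`, the residue matrix at `q` has
eigenvalues `0` and `−1` (its characteristic polynomial is `X² + X`), and the
singularity is apparent — i.e. removable by the elementary transformation
`M = [[1,0],[p, x−q]]` — iff `ĉ(q) + p·d̂(q) − p²/P(q) = 0`. -/
theorem apparent_singularity_criterion
    (P : Polynomial ℂ) (q p : ℂ) (hPq : P.eval q ≠ 0)
    (ch dh : RatFunc ℂ) (hch : holoAt q ch) (hdh : holoAt q dh)
    (c₀ d₀ : RatFunc ℂ)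
    (hc₀ : c₀ = RatFunc.C p * ((RatFunc.X : RatFunc ℂ) - RatFunc.C q)⁻¹ + ch)
    (hd₀ : d₀ = -((RatFunc.X : RatFunc ℂ) - RatFunc.C q)⁻¹ + dh)
    (Ω₀ M : Matrix (Fin 2) (Fin 2) (RatFunc ℂ))
    (hΩ₀ : Ω₀ = Matrix.of !![0, (algebraMap (Polynomial ℂ) (RatFunc ℂ) P)⁻¹; c₀, d₀])
    (hM : M = Matrix.of !![1, 0; RatFunc.C p, (RatFunc.X : RatFunc ℂ) - RatFunc.C q]) :
    -- the residue matrix at q is [[0,0],[p,−1]], with eigenvalues 0 and −1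
    (Matrix.of fun i j => resAt q (Ω₀ i j)) = Matrix.of !![0, 0; p, -1] ∧
    (Matrix.of !![(0 : ℂ), 0; p, -1]).charpoly = Polynomial.X ^ 2 + Polynomial.X ∧
    -- apparentness criterion
    ((∀ i j, holoAt q ((gaugeR M Ω₀) i j)) ↔
      lcoeff q 0 ch + p * lcoeff q 0 dh - p ^ 2 / P.eval q = 0) := by
  have hPinv : holoAt q (algebraMap _ _ P)⁻¹ := holoAt_inv_algebraMap hPq
  rw [Matrix.of_matrix] at hΩ₀ hM ⊢
  refine ⟨?residue, ?charpoly, ?apparent⟩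
  case residue =>
    ext i j
    fin_cases i <;> fin_cases j <;>
      simp [resAt, hΩ₀, hc₀, hd₀, lcoeff_add, lcoeff_neg, lcoeff_C_mul, lcoeff_inv_X_sub_C,
        lcoeff_zero, hPinv (-1), hch (-1), hdh (-1)]
  case charpoly =>
    simp [Matrix.charpoly_fin_two, Matrix.trace_fin_two, Matrix.det_fin_two]
  case apparent =>
    obtain rfl : M = elementaryGauge p q := hM
    have hc : c₀ + RatFunc.C p * d₀ - RatFunc.C p * 0 - RatFunc.C p ^ 2 * (algebraMap _ _ P)⁻¹
        = ch + RatFunc.C p * dh - RatFunc.C (p ^ 2) * (algebraMap _ _ P)⁻¹ := by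
      rw [hc₀, hd₀, map_pow]
      ring
    have hd : d₀ - RatFunc.C p * (algebraMap _ _ P)⁻¹ + (RatFunc.X - RatFunc.C q)⁻¹
        = dh - RatFunc.C p * (algebraMap _ _ P)⁻¹ := by
      rw [hd₀]
      ring
    rw [hΩ₀, holoAt_gaugeR_elementaryGauge_iff (fun m _ => lcoeff_zero q m) hPinv
        (hd ▸ hdh.sub (hPinv.C_mul p)) (hc ▸ (hch.add (hdh.C_mul p)).sub (hPinv.C_mul _)),
      hc, lcoeff_sub, lcoeff_add, lcoeff_C_mul, lcoeff_C_mul, lcoeff_zero_inv_algebraMap q hPq,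
      div_eq_mul_inv]

end
end
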